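/- arXiv:2406.07953 — 2 statements merged into one kernel-verified Lean document; each statement's English description precedes it below -/
import Mathlib

section
/- For a function g : ℕ^m → ℝ^d with l₂-sensitivity Δ₂ (i.e., ‖g(S) − g(S')‖₂ ≤ Δ₂ for all neighboring S, S'), the Gaussian mechanism M(S) = g(S) + N(0, σ²·I_d) with σ² = Δ₂²/(2ρ) satisfies ρ-zero-concentrated differential privacy. -/
open MeasureTheory ProbabilityTheory

/-- The `α`-Rényi divergence between two measures. -/
noncomputable def renyiDiv {Ω : Type*} [MeasurableSpace Ω] (P Q : Measure Ω) (α : ℝ) : ℝ :=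
  (α - 1)⁻¹ * Real.log (∫ x, ((P.rnDeriv Q) x).toReal ^ α ∂Q)

/-- Two inputs are neighboring if they differ in exactly one coordinate. -/
def Neighbor {ι E : Type*} (S S' : ι → E) : Prop :=
  ∃ i, S i ≠ S' i ∧ ∀ j, j ≠ i → S j = S' j

/-- A mechanism `M` satisfies `ρ`-zCDP w.r.t. the neighboring relation `nbr`. -/
def zCDP {I Ω : Type*} [MeasurableSpace Ω] (nbr : I → I → Prop) (M : I → Measure Ω)
    (ρ : ℝ) : Prop :=
  ∀ S S', nbr S S' → ∀ α : ℝ, 1 < α → renyiDiv (M S) (M S') α ≤ ρ * α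

/-!
The mechanism's output distribution on `S` is the product `⨂ᵢ N(g(S)ᵢ, σ²)`. Coordinatewise,
`N(m, v)` has density `y ↦ exp(((y - m')² - (y - m)²) / 2v)` with respect to `N(m', v)`, so the
Radon–Nikodym derivative of the two products is the product of these likelihood ratios. Completing
the square, the `α`-th power of the ratio integrates against `N(m', v)` to
`exp(α(α - 1)(m - m')² / 2v)`, whence `D_α = α ‖g(S) - g(S')‖² / 2σ² ≤ α Δ² / 2σ² = ρ α`.
-/

open Real
open scoped ENNReal NNReal

theorem Set.indicator_univ_pi_prod_apply {ι R : Type*} [Fintype ι] [CommMonoidWithZero R]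
    {X : ι → Type*} (s : ∀ i, Set (X i)) (f : ∀ i, X i → R) (x : ∀ i, X i) :
    (Set.univ.pi s).indicator (fun x => ∏ i, f i (x i)) x = ∏ i, (s i).indicator (f i) (x i) := by
  by_cases hx : x ∈ Set.univ.pi s
  · rw [Set.indicator_of_mem hx]
    exact Finset.prod_congr rfl fun i _ => (Set.indicator_of_mem (hx i (Set.mem_univ i)) _).symm
  · obtain ⟨i, hi⟩ : ∃ i, x i ∉ s i := by simpa [Set.mem_pi] using hx
    rw [Set.indicator_of_notMem hx, Finset.prod_eq_zero (Finset.mem_univ i)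
      (Set.indicator_of_notMem hi _)]

section Pi

variable {ι : Type*} [Fintype ι] {X : ι → Type*} [∀ i, MeasurableSpace (X i)]

theorem MeasureTheory.lintegral_pi_prod_eq_prod (μ : ∀ i, Measure (X i))
    [∀ i, IsProbabilityMeasure (μ i)] {f : ∀ i, X i → ℝ≥0∞} (hf : ∀ i, Measurable (f i)) :
    ∫⁻ x, ∏ i, f i (x i) ∂Measure.pi μ = ∏ i, ∫⁻ y, f i y ∂μ i := by
  rw [lintegral_prod_eq_prod_lintegral_of_indepFun _ _
      (iIndepFun_pi fun i => (hf i).aemeasurable) fun i => (hf i).comp (measurable_pi_apply i)]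
  exact Finset.prod_congr rfl fun i _ => (measurePreserving_eval μ i).lintegral_comp (hf i)

theorem MeasureTheory.Measure.pi_eq_withDensity_prod {μ ν : ∀ i, Measure (X i)}
    [∀ i, IsProbabilityMeasure (μ i)] [∀ i, SigmaFinite (ν i)] {f : ∀ i, X i → ℝ≥0∞}
    (hf : ∀ i, Measurable (f i)) (hν : ∀ i, ν i = (μ i).withDensity (f i)) :
    Measure.pi ν = (Measure.pi μ).withDensity fun x => ∏ i, f i (x i) := by
  refine Measure.pi_eq fun s hs => ?_
  rw [withDensity_apply _ (.univ_pi hs), ← lintegral_indicator (.univ_pi hs)]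
  simp_rw [Set.indicator_univ_pi_prod_apply]
  rw [lintegral_pi_prod_eq_prod μ fun i => (hf i).indicator (hs i)]
  refine Finset.prod_congr rfl fun i _ => ?_
  rw [lintegral_indicator (hs i), hν i, withDensity_apply _ (hs i)]

end Pi

noncomputable def gaussianLikelihoodRatio (m m' : ℝ) (v : ℝ≥0) (y : ℝ) : ℝ :=
  exp (((y - m') ^ 2 - (y - m) ^ 2) / (2 * v))

theorem measurable_gaussianLikelihoodRatio (m m' : ℝ) (v : ℝ≥0) :
    Measurable (gaussianLikelihoodRatio m m' v) := by
  unfold gaussianLikelihoodRatio; fun_prop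

theorem gaussianLikelihoodRatio_mul_gaussianPDFReal (m m' : ℝ) (v : ℝ≥0) (y : ℝ) :
    gaussianLikelihoodRatio m m' v y * gaussianPDFReal m' v y = gaussianPDFReal m v y := by
  unfold gaussianLikelihoodRatio gaussianPDFReal
  rw [mul_left_comm, ← exp_add]
  congr 2
  ring

theorem gaussianReal_eq_withDensity_gaussianLikelihoodRatio (m m' : ℝ) {v : ℝ≥0} (hv : v ≠ 0) :
    gaussianReal m v = (gaussianReal m' v).withDensity
      fun y => ENNReal.ofReal (gaussianLikelihoodRatio m m' v y) := by
  rw [gaussianReal_of_var_ne_zero _ hv, gaussianReal_of_var_ne_zero _ hv,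
    ← withDensity_mul _ (measurable_gaussianPDF _ _)
      (measurable_gaussianLikelihoodRatio m m' v).ennreal_ofReal]
  congr 1
  funext y
  simp only [gaussianPDF, Pi.mul_apply]
  rw [← ENNReal.ofReal_mul (gaussianPDFReal_nonneg _ _ _), mul_comm,
    gaussianLikelihoodRatio_mul_gaussianPDFReal]

theorem gaussianLikelihoodRatio_rpow_mul_gaussianPDFReal (m m' : ℝ) {v : ℝ≥0} (hv : v ≠ 0)
    (α y : ℝ) :
    gaussianLikelihoodRatio m m' v y ^ α * gaussianPDFReal m' v y
      = exp (α * (α - 1) * (m - m') ^ 2 / (2 * v)) * gaussianPDFReal (m' + α * (m - m')) v y := by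
  have hv' : (v : ℝ) ≠ 0 := by exact_mod_cast hv
  unfold gaussianLikelihoodRatio gaussianPDFReal
  rw [← exp_mul, mul_left_comm, ← exp_add, mul_left_comm (exp _), ← exp_add]
  congr 2
  field_simp
  ring

theorem integral_gaussianLikelihoodRatio_rpow (m m' : ℝ) {v : ℝ≥0} (hv : v ≠ 0) (α : ℝ) :
    ∫ y, gaussianLikelihoodRatio m m' v y ^ α ∂gaussianReal m' v
      = exp (α * (α - 1) * (m - m') ^ 2 / (2 * v)) := by
  simp_rw [integral_gaussianReal_eq_integral_smul hv, smul_eq_mul, mul_comm (gaussianPDFReal _ _ _),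
    gaussianLikelihoodRatio_rpow_mul_gaussianPDFReal m m' hv, integral_const_mul,
    integral_gaussianPDFReal_eq_one _ hv, mul_one]

section PiGaussian

variable {ι : Type*} [Fintype ι] {v : ℝ≥0}

theorem rnDeriv_pi_gaussianReal (hv : v ≠ 0) (μ μ' : ι → ℝ) :
    (Measure.pi fun i => gaussianReal (μ i) v).rnDeriv (Measure.pi fun i => gaussianReal (μ' i) v)
      =ᵐ[Measure.pi fun i => gaussianReal (μ' i) v]
        fun x => ∏ i, ENNReal.ofReal (gaussianLikelihoodRatio (μ i) (μ' i) v (x i)) := by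
  have hf i := (measurable_gaussianLikelihoodRatio (μ i) (μ' i) v).ennreal_ofReal
  rw [Measure.pi_eq_withDensity_prod hf
    fun i => gaussianReal_eq_withDensity_gaussianLikelihoodRatio (μ i) (μ' i) hv]
  exact Measure.rnDeriv_withDensity _ <|
    Finset.measurable_prod _ fun i _ => (hf i).comp (measurable_pi_apply i)

theorem integral_rnDeriv_rpow_pi_gaussianReal (hv : v ≠ 0) (μ μ' : ι → ℝ) (α : ℝ) :
    ∫ x, ((Measure.pi fun i => gaussianReal (μ i) v).rnDeriv
        (Measure.pi fun i => gaussianReal (μ' i) v) x).toReal ^ α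
        ∂(Measure.pi fun i => gaussianReal (μ' i) v)
      = exp (α * (α - 1) * (∑ i, (μ i - μ' i) ^ 2) / (2 * v)) := by
  have hratio_nonneg i y : 0 ≤ gaussianLikelihoodRatio (μ i) (μ' i) v y := (exp_pos _).le
  have hintegrand : ∀ᵐ x ∂(Measure.pi fun i => gaussianReal (μ' i) v),
      ((Measure.pi fun i => gaussianReal (μ i) v).rnDeriv
        (Measure.pi fun i => gaussianReal (μ' i) v) x).toReal ^ α
        = ∏ i, gaussianLikelihoodRatio (μ i) (μ' i) v (x i) ^ α := by
    filter_upwards [rnDeriv_pi_gaussianReal hv μ μ'] with x hx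
    simp_rw [hx, ENNReal.toReal_prod, ENNReal.toReal_ofReal (hratio_nonneg _ _)]
    exact (Real.finsetProd_rpow _ _ (fun i _ => hratio_nonneg _ _) α).symm
  rw [integral_congr_ae hintegrand,
    integral_fintype_prod_eq_prod (fun i y => gaussianLikelihoodRatio (μ i) (μ' i) v y ^ α)]
  simp_rw [integral_gaussianLikelihoodRatio_rpow _ _ hv, ← exp_sum, Finset.mul_sum, Finset.sum_div]

theorem renyiDiv_pi_gaussianReal (hv : v ≠ 0) (μ μ' : ι → ℝ) {α : ℝ} (hα : α ≠ 1) :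
    renyiDiv (Measure.pi fun i => gaussianReal (μ i) v)
        (Measure.pi fun i => gaussianReal (μ' i) v) α
      = α * (∑ i, (μ i - μ' i) ^ 2) / (2 * v) := by
  have hα' : α - 1 ≠ 0 := sub_ne_zero.mpr hα
  rw [renyiDiv, integral_rnDeriv_rpow_pi_gaussianReal hv, log_exp]
  field_simp

theorem map_add_pi_gaussianReal (c : ι → ℝ) (v : ℝ≥0) :
    (Measure.pi fun _ : ι => gaussianReal 0 v).map (fun x i => c i + x i)
      = Measure.pi fun i => gaussianReal (c i) v := by
  rw [Measure.pi_map_pi fun i => (measurable_const_add (c i)).aemeasurable]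
  simp_rw [gaussianReal_map_const_add, zero_add]

end PiGaussian

/-- The Gaussian mechanism `M(S) = g(S) + N(0, σ²·I_d)` with `σ² = Δ₂²/(2ρ)` applied to a
function `g : ℕ^m → ℝ^d` with `l₂`-sensitivity `Δ₂` satisfies `ρ`-zCDP. -/
theorem gaussian_mechanism_zCDP {m d : ℕ} (g : (Fin m → ℕ) → (Fin d → ℝ))
    (Δ ρ σ : ℝ) (hΔ : 0 < Δ) (hρ : 0 < ρ)
    (hsens : ∀ S S', Neighbor S S' → Real.sqrt (∑ i, (g S i - g S' i) ^ 2) ≤ Δ)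
    (hσ : σ ^ 2 = Δ ^ 2 / (2 * ρ)) :
    zCDP Neighbor
      (fun S => Measure.map (fun x i => g S i + x i)
        (Measure.pi fun _ : Fin d => gaussianReal 0 ((σ ^ 2).toNNReal))) ρ := by
  have hv : (σ ^ 2).toNNReal ≠ 0 := by
    rw [Ne, Real.toNNReal_eq_zero, not_le, hσ]
    positivity
  have hv_eq : ((σ ^ 2).toNNReal : ℝ) = Δ ^ 2 / (2 * ρ) := by
    rw [Real.coe_toNNReal _ (sq_nonneg σ), hσ]
  intro S S' hS α hα
  have hsum : ∑ i, (g S i - g S' i) ^ 2 ≤ Δ ^ 2 := (Real.sqrt_le_left hΔ.le).1 (hsens S S' hS)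
  simp only [map_add_pi_gaussianReal]
  rw [renyiDiv_pi_gaussianReal hv _ _ hα.ne', hv_eq]
  calc α * (∑ i, (g S i - g S' i) ^ 2) / (2 * (Δ ^ 2 / (2 * ρ)))
      = α * ρ * (∑ i, (g S i - g S' i) ^ 2) / Δ ^ 2 := by field_simp
    _ ≤ α * ρ * Δ ^ 2 / Δ ^ 2 := by gcongr
    _ = ρ * α := by field_simp
end

section
/- Checkpoint count bound for the smooth-histogram index construction: for α ∈ (0,1) and window parameter N = ⌈w^β⌉, any sequence of indices N = i₁ > i₂ > … > i_k ≥ 1 satisfying, for every consecutive pair, either i_{j+1} ≥ (1−α)·i_j or i_{j+1} = i_j − 1, and which is maximal in the sense that removing any intermediate index violates the condition i_{j+1} ≥ (1−α)²·i_j, has length k = O((1/α)·log N). -/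
/-- Checkpoint count bound for the smooth-histogram index construction: for `α ∈ (0,1)`
and `N = ⌈w^β⌉ ≥ 2`, any maximal sequence of indices `N = i₁ > i₂ > … > i_k ≥ 1` such
that each consecutive pair satisfies `i_{j+1} ≥ (1−α)·i_j` or `i_{j+1} = i_j − 1`, and
such that no intermediate index can be removed (i.e. skipping one index always violates
`i_{j+2} ≥ (1−α)²·i_j`), has length `k = O((1/α)·log N)`. -/
theorem checkpoint_count_bound :
    ∃ C : ℝ, 0 < C ∧
      ∀ (α : ℝ), 0 < α → α < 1 →
      ∀ (N k : ℕ) (i : ℕ → ℕ), 2 ≤ N → 0 < k →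
        i 0 = N →
        (∀ j, j < k → 1 ≤ i j) →
        (∀ j, j + 1 < k → i (j + 1) < i j) →
        (∀ j, j + 1 < k → ((1 - α) * i j ≤ (i (j + 1) : ℝ) ∨ i (j + 1) = i j - 1)) →
        (∀ j, j + 2 < k → (i (j + 2) : ℝ) < (1 - α) ^ 2 * i j) →
        (k : ℝ) ≤ C * (1 / α) * Real.log N := by
  refine ⟨8, by norm_num, ?_⟩
  intro α hα0 hα1 N k i hN hk h0 hpos _ _ hmax
  have h1α0 : (0:ℝ) ≤ 1 - α := by linarith
  -- decay along even indices
  have hdecay : ∀ j, 2 * j < k → (i (2 * j) : ℝ) ≤ (1 - α) ^ (2 * j) * N := by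
    intro j
    induction j with
    | zero => intro _; simp [h0]
    | succ n ih =>
      intro hlt
      have h2 : 2 * n + 2 < k := by omega
      have hn : 2 * n < k := by omega
      have := hmax (2 * n) h2
      have hpow : (1 - α) ^ 2 * (i (2 * n) : ℝ) ≤ (1 - α) ^ 2 * ((1 - α) ^ (2 * n) * N) := by
        apply mul_le_mul_of_nonneg_left (ih hn) (by positivity)
      have heq : 2 * (n + 1) = 2 * n + 2 := by ring
      rw [heq]
      calc (i (2 * n + 2) : ℝ) ≤ (1 - α) ^ 2 * (i (2 * n) : ℝ) := le_of_lt this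
        _ ≤ (1 - α) ^ 2 * ((1 - α) ^ (2 * n) * N) := hpow
        _ = (1 - α) ^ (2 * n + 2) * N := by ring
  set j := (k - 1) / 2 with hj
  have hjk : 2 * j < k := by omega
  have hkj : k ≤ 2 * j + 2 := by omega
  have hge1 : (1:ℝ) ≤ (i (2 * j) : ℝ) := by exact_mod_cast hpos (2 * j) hjk
  have hNe : (1:ℝ) ≤ (1 - α) ^ (2 * j) * N := le_trans hge1 (hdecay j hjk)
  have hNpos : (0:ℝ) < N := by positivity
  have hN2 : (2:ℝ) ≤ N := by exact_mod_cast hN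
  have hlogN : Real.log 2 ≤ Real.log N := Real.log_le_log (by norm_num) hN2
  have hlog2 : (0.6:ℝ) ≤ Real.log 2 := le_of_lt (by linarith [Real.log_two_gt_d9])
  have hlogNpos : (0.6:ℝ) ≤ Real.log N := le_trans hlog2 hlogN
  -- log (1-α) ≤ -α
  have hlog1α : Real.log (1 - α) ≤ -α := by
    rcases eq_or_lt_of_le h1α0 with h | h
    · rw [← h, Real.log_zero]; linarith
    · have := Real.log_le_sub_one_of_pos h
      linarith
  -- from hNe : take logs
  have hαj : 2 * (j:ℝ) * α ≤ Real.log N := by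
    have hpowpos : (0:ℝ) < (1 - α) ^ (2 * j) * N := lt_of_lt_of_le one_pos hNe
    rcases eq_or_lt_of_le h1α0 with h | h
    · -- 1 - α = 0; then (1-α)^(2j) * N ≥ 1 forces j = 0
      rcases Nat.eq_zero_or_pos j with hj0 | hj0
      · rw [hj0]; simp; positivity
      · exfalso
        have : (1 - α) ^ (2 * j) = 0 := by
          rw [← h]; exact zero_pow (by omega)
        rw [this] at hNe; simp at hNe; linarith
    · have hlo : (0:ℝ) ≤ Real.log ((1 - α) ^ (2 * j) * N) :=
        Real.log_nonneg hNe
      rw [Real.log_mul (by positivity) (by positivity), Real.log_pow] at hlo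
      have : (2 * j : ℝ) * Real.log (1 - α) + Real.log N ≥ 0 := by
        push_cast at hlo ⊢; linarith
      nlinarith [mul_le_mul_of_nonneg_left hlog1α (show (0:ℝ) ≤ 2 * j by positivity)]
  have hjb : 2 * (j:ℝ) ≤ Real.log N / α := by
    rw [le_div_iff₀ hα0]; linarith
  have hk2 : (k:ℝ) ≤ 2 * (j:ℝ) + 2 := by exact_mod_cast hkj
  have h2bound : (2:ℝ) ≤ 4 * (1/α) * Real.log N := by
    have hinv : (1:ℝ) ≤ 1/α := one_le_one_div hα0 (le_of_lt hα1)
    nlinarith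
  calc (k:ℝ) ≤ 2 * (j:ℝ) + 2 := hk2
    _ ≤ Real.log N / α + 4 * (1/α) * Real.log N := by linarith
    _ ≤ 8 * (1/α) * Real.log N := by
        rw [div_eq_mul_one_div]
        nlinarith [Real.log_nonneg (le_trans (by norm_num) hN2), one_div_pos.mpr hα0]
end
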